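/- Lie derivative identity along Σ̃ (infinitesimal conformal invariance): for every point p with H(p) = 1 + ε and every vector w tangent to Σ̃ at p (i.e. (fderiv H p)(w) = 0), one has dβ(p)(X(p), w) = 2ε⁻²(2r²−1)z·β(p)(w), where r² = u² + v². This expresses 𝓛_X(β|TΣ̃) = 2ε⁻²(2r²−1)z · β|TΣ̃. -/

import Mathlib

noncomputable section
open scoped BigOperators RealInnerProductSpace

/-- Points of `ℝ^(2n+1)` with the Euclidean structure. -/
abbrev Pt (n : ℕ) : Type := EuclideanSpace ℝ (Fin (2*n+1))

/-- The index of the `u`-coordinate. -/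
def idxU (n : ℕ) : Fin (2*n+1) := ⟨0, by omega⟩
/-- The index of the `v`-coordinate (equal to `1` whenever `n ≥ 1`). -/
def idxV (n : ℕ) : Fin (2*n+1) := ⟨1 % (2*n+1), Nat.mod_lt _ (by omega)⟩
/-- The index of the `z`-coordinate (equal to `2` whenever `n ≥ 1`). -/
def idxZ (n : ℕ) : Fin (2*n+1) := ⟨2 % (2*n+1), Nat.mod_lt _ (by omega)⟩
/-- The index of the `xᵢ`-coordinate, `i = 0, …, n-2`. -/
def idxX {n : ℕ} (i : Fin (n-1)) : Fin (2*n+1) := ⟨3+2*i.val, by have := i.isLt; omega⟩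
/-- The index of the `yᵢ`-coordinate, `i = 0, …, n-2`. -/
def idxY {n : ℕ} (i : Fin (n-1)) : Fin (2*n+1) := ⟨4+2*i.val, by have := i.isLt; omega⟩

/-- The `u`-coordinate. -/
def uu {n : ℕ} (p : Pt n) : ℝ := p (idxU n)
/-- The `v`-coordinate. -/
def vv {n : ℕ} (p : Pt n) : ℝ := p (idxV n)
/-- The `z`-coordinate. -/
def zz {n : ℕ} (p : Pt n) : ℝ := p (idxZ n)
/-- The `xᵢ`-coordinate, `i = 0, …, n-2`. -/
def xx {n : ℕ} (i : Fin (n-1)) (p : Pt n) : ℝ := p (idxX i)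
/-- The `yᵢ`-coordinate, `i = 0, …, n-2`. -/
def yy {n : ℕ} (i : Fin (n-1)) (p : Pt n) : ℝ := p (idxY i)
/-- `r² = u² + v²`. -/
def r2 {n : ℕ} (p : Pt n) : ℝ := uu p ^ 2 + vv p ^ 2

/-- `H(p) = u² + v² + ε⁻²(z² + Σᵢ(xᵢ² + yᵢ²))`; the hypersurface `Σ̃` is `{H = 1+ε}`. -/
def Hfun {n : ℕ} (ε : ℝ) (p : Pt n) : ℝ :=
  r2 p + ε⁻¹ ^ 2 * (zz p ^ 2 + ∑ i : Fin (n-1), (xx i p ^ 2 + yy i p ^ 2))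

/-- `u`-component of the vector field `X`. -/
def Xu {n : ℕ} (ε : ℝ) (p : Pt n) : ℝ :=
  ε⁻¹ ^ 2 * (r2 p - 1) * zz p * uu p - (1 + 2*ε - 2 * ε⁻¹ ^ 2 * zz p ^ 2) * vv p
/-- `v`-component of the vector field `X`. -/
def Xv {n : ℕ} (ε : ℝ) (p : Pt n) : ℝ :=
  ε⁻¹ ^ 2 * (r2 p - 1) * zz p * vv p + (1 + 2*ε - 2 * ε⁻¹ ^ 2 * zz p ^ 2) * uu p
/-- `z`-component of the vector field `X`. -/
def Xz {n : ℕ} (ε : ℝ) (p : Pt n) : ℝ :=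
  (r2 p - 1) ^ 2 + (2 * r2 p - 1) * (ε⁻¹ ^ 2 * zz p ^ 2 - ε)
/-- `xᵢ`-component of the vector field `X`. -/
def Xx {n : ℕ} (ε : ℝ) (i : Fin (n-1)) (p : Pt n) : ℝ :=
  ε⁻¹ ^ 2 * (2 * r2 p - 1) * zz p * xx i p - ε⁻¹ ^ 2 * (2 * r2 p ^ 2 - 2 * r2 p + 1) * yy i p
/-- `yᵢ`-component of the vector field `X`. -/
def Xy {n : ℕ} (ε : ℝ) (i : Fin (n-1)) (p : Pt n) : ℝ :=
  ε⁻¹ ^ 2 * (2 * r2 p - 1) * zz p * yy i p + ε⁻¹ ^ 2 * (2 * r2 p ^ 2 - 2 * r2 p + 1) * xx i p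

/-- The vector field `X` of the paper, assembled from its components. -/
def XV {n : ℕ} (ε : ℝ) (p : Pt n) : Pt n :=
  (EuclideanSpace.single (idxU n) (Xu ε p) : Pt n) +
  (EuclideanSpace.single (idxV n) (Xv ε p) : Pt n) +
  (EuclideanSpace.single (idxZ n) (Xz ε p) : Pt n) +
  ∑ i : Fin (n-1),
    ((EuclideanSpace.single (idxX i) (Xx ε i p) : Pt n) +
     (EuclideanSpace.single (idxY i) (Xy ε i p) : Pt n))

/-- The 1-form `β = (2r²−1)dz + r²(r²−1)dθ + Σᵢ(xᵢ dyᵢ − yᵢ dxᵢ)` evaluated at `p` on `w`. -/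
def βval {n : ℕ} (p w : Pt n) : ℝ :=
  (2 * r2 p - 1) * zz w + (r2 p - 1) * (uu p * vv w - vv p * uu w)
    + ∑ i : Fin (n-1), (xx i p * yy i w - yy i p * xx i w)

/-- The 2-form `dβ = 4r dr∧dz + 2r(2r²−1)dr∧dθ + 2Σᵢ dxᵢ∧dyᵢ` evaluated at `p` on `(a, b)`. -/
def dβval {n : ℕ} (p a b : Pt n) : ℝ :=
  4 * (uu p * uu a + vv p * vv a) * zz b - 4 * (uu p * uu b + vv p * vv b) * zz a
    + 2 * (2 * r2 p - 1) * (uu a * vv b - vv a * uu b)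
    + 2 * ∑ i : Fin (n-1), (xx i a * yy i b - yy i a * xx i b)

/- ### Auxiliary lemmas -/

lemma PtSum_apply {n m : ℕ} (f : Fin m → Pt n) (j : Fin (2*n+1)) :
    (∑ i, f i) j = ∑ i, f i j := by
  induction (Finset.univ : Finset (Fin m)) using Finset.cons_induction with
  | empty => rfl
  | cons a s ha ih => rw [Finset.sum_cons, Finset.sum_cons, ← ih]; rfl


variable {n : ℕ}

lemma idxV_val (hn : 1 ≤ n) : (idxV n).val = 1 := by
  show 1 % (2*n+1) = 1
  have h3 : 3 ≤ 2*n+1 := by omega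
  exact Nat.mod_eq_of_lt (by omega)
lemma idxZ_val (hn : 1 ≤ n) : (idxZ n).val = 2 := by
  show 2 % (2*n+1) = 2
  have h3 : 3 ≤ 2*n+1 := by omega
  exact Nat.mod_eq_of_lt (by omega)

lemma idxU_ne_idxV (hn : 1 ≤ n) : idxU n ≠ idxV n :=
  Fin.ne_of_val_ne (show (0:ℕ) ≠ (idxV n).val by rw [idxV_val hn]; omega)
lemma idxU_ne_idxZ (hn : 1 ≤ n) : idxU n ≠ idxZ n :=
  Fin.ne_of_val_ne (show (0:ℕ) ≠ (idxZ n).val by rw [idxZ_val hn]; omega)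
lemma idxV_ne_idxZ (hn : 1 ≤ n) : idxV n ≠ idxZ n :=
  Fin.ne_of_val_ne (by rw [idxV_val hn, idxZ_val hn]; omega)
lemma idxU_ne_idxX (i : Fin (n-1)) : idxU n ≠ idxX i :=
  Fin.ne_of_val_ne (show 0 ≠ 3 + 2*i.val by omega)
lemma idxU_ne_idxY (i : Fin (n-1)) : idxU n ≠ idxY i :=
  Fin.ne_of_val_ne (show 0 ≠ 4 + 2*i.val by omega)
lemma idxV_ne_idxX (hn : 1 ≤ n) (i : Fin (n-1)) : idxV n ≠ idxX i :=
  Fin.ne_of_val_ne (by rw [idxV_val hn]; show 1 ≠ 3 + 2*i.val; omega)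
lemma idxV_ne_idxY (hn : 1 ≤ n) (i : Fin (n-1)) : idxV n ≠ idxY i :=
  Fin.ne_of_val_ne (by rw [idxV_val hn]; show 1 ≠ 4 + 2*i.val; omega)
lemma idxZ_ne_idxX (hn : 1 ≤ n) (i : Fin (n-1)) : idxZ n ≠ idxX i :=
  Fin.ne_of_val_ne (by rw [idxZ_val hn]; show 2 ≠ 3 + 2*i.val; omega)
lemma idxZ_ne_idxY (hn : 1 ≤ n) (i : Fin (n-1)) : idxZ n ≠ idxY i :=
  Fin.ne_of_val_ne (by rw [idxZ_val hn]; show 2 ≠ 4 + 2*i.val; omega)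
lemma idxX_ne_idxY (i j : Fin (n-1)) : idxX i ≠ idxY j :=
  Fin.ne_of_val_ne (show 3 + 2*i.val ≠ 4 + 2*j.val by omega)
lemma idxX_inj {i j : Fin (n-1)} : idxX i = idxX j ↔ i = j := by
  rw [Fin.ext_iff (a := idxX i), Fin.ext_iff (a := i)]
  show 3 + 2*i.val = 3 + 2*j.val ↔ _
  omega
lemma idxY_inj {i j : Fin (n-1)} : idxY i = idxY j ↔ i = j := by
  rw [Fin.ext_iff (a := idxY i), Fin.ext_iff (a := i)]
  show 4 + 2*i.val = 4 + 2*j.val ↔ _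
  omega

lemma uu_XV (hn : 1 ≤ n) (ε : ℝ) (p : Pt n) : uu (XV ε p) = Xu ε p := by
  simp [XV, uu, PiLp.add_apply, PtSum_apply, EuclideanSpace.single_apply,
    idxU_ne_idxV hn, idxU_ne_idxZ hn, idxU_ne_idxX, idxU_ne_idxY]
lemma vv_XV (hn : 1 ≤ n) (ε : ℝ) (p : Pt n) : vv (XV ε p) = Xv ε p := by
  simp [XV, vv, PiLp.add_apply, PtSum_apply, EuclideanSpace.single_apply,
    (idxU_ne_idxV hn).symm, idxV_ne_idxZ hn, idxV_ne_idxX hn, idxV_ne_idxY hn]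
lemma zz_XV (hn : 1 ≤ n) (ε : ℝ) (p : Pt n) : zz (XV ε p) = Xz ε p := by
  simp [XV, zz, PiLp.add_apply, PtSum_apply, EuclideanSpace.single_apply,
    (idxU_ne_idxZ hn).symm, (idxV_ne_idxZ hn).symm, idxZ_ne_idxX hn, idxZ_ne_idxY hn]
lemma xx_XV (hn : 1 ≤ n) (ε : ℝ) (p : Pt n) (i : Fin (n-1)) : xx i (XV ε p) = Xx ε i p := by
  simp [XV, xx, PiLp.add_apply, PtSum_apply, EuclideanSpace.single_apply,
    (idxU_ne_idxX (n := n) i).symm, (idxV_ne_idxX hn i).symm, (idxZ_ne_idxX hn i).symm,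
    (idxX_ne_idxY (n := n)), idxX_inj (n := n)]
lemma yy_XV (hn : 1 ≤ n) (ε : ℝ) (p : Pt n) (i : Fin (n-1)) : yy i (XV ε p) = Xy ε i p := by
  simp [XV, yy, PiLp.add_apply, PtSum_apply, EuclideanSpace.single_apply,
    (idxU_ne_idxY (n := n) i).symm, (idxV_ne_idxY hn i).symm, (idxZ_ne_idxY hn i).symm,
    fun j => (idxX_ne_idxY (n := n) j i).symm, idxY_inj (n := n)]


lemma sq_coord_hasFDerivAt {n : ℕ} (j : Fin (2*n+1)) (p : Pt n) :
    HasFDerivAt (fun q : Pt n => q j ^ 2)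
      ((2 * p j) • (EuclideanSpace.proj j : Pt n →L[ℝ] ℝ)) p := by
  have h := (EuclideanSpace.proj (𝕜 := ℝ) j).hasFDerivAt (x := p)
  have h2 := h.mul h
  have e : (fun q : Pt n => q j ^ 2) =
      ⇑(EuclideanSpace.proj (𝕜 := ℝ) j) * ⇑(EuclideanSpace.proj (𝕜 := ℝ) j) := by
    ext q; simp [sq]
  rw [e]
  exact h2.congr_fderiv (by ext w; simp [two_mul]; ring)

lemma fderiv_Hfun {n : ℕ} (ε : ℝ) (p w : Pt n) :
    fderiv ℝ (Hfun ε : Pt n → ℝ) p w =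
      2 * uu p * uu w + 2 * vv p * vv w +
        ε⁻¹ ^ 2 * (2 * zz p * zz w + ∑ i : Fin (n-1), (2 * xx i p * xx i w + 2 * yy i p * yy i w)) := by
  have h : HasFDerivAt (Hfun ε : Pt n → ℝ)
      ((2 * uu p) • (EuclideanSpace.proj (idxU n) : Pt n →L[ℝ] ℝ)
        + (2 * vv p) • (EuclideanSpace.proj (idxV n) : Pt n →L[ℝ] ℝ)
        + ε⁻¹ ^ 2 • ((2 * zz p) • (EuclideanSpace.proj (idxZ n) : Pt n →L[ℝ] ℝ)
          + ∑ i : Fin (n-1),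
            ((2 * xx i p) • (EuclideanSpace.proj (idxX i) : Pt n →L[ℝ] ℝ)
              + (2 * yy i p) • (EuclideanSpace.proj (idxY i) : Pt n →L[ℝ] ℝ)))) p := by
    have hsum : HasFDerivAt
        (fun q : Pt n => ∑ i : Fin (n-1), (q (idxX i) ^ 2 + q (idxY i) ^ 2))
        (∑ i : Fin (n-1),
          ((2 * xx i p) • (EuclideanSpace.proj (idxX i) : Pt n →L[ℝ] ℝ)
            + (2 * yy i p) • (EuclideanSpace.proj (idxY i) : Pt n →L[ℝ] ℝ))) p :=
      HasFDerivAt.fun_sum fun i _ =>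
        (sq_coord_hasFDerivAt (idxX i) p).add (sq_coord_hasFDerivAt (idxY i) p)
    exact ((sq_coord_hasFDerivAt (idxU n) p).add (sq_coord_hasFDerivAt (idxV n) p)).add
      (((sq_coord_hasFDerivAt (idxZ n) p).add hsum).const_smul (ε⁻¹ ^ 2))
  rw [h.fderiv]
  simp only [ContinuousLinearMap.add_apply, ContinuousLinearMap.coe_smul', Pi.smul_apply,
    ContinuousLinearMap.sum_apply, PiLp.proj_apply, smul_eq_mul, uu, vv, zz, xx, yy,
    Finset.mul_sum]

/-- Infinitesimal conformal invariance along `Σ̃`: for `p ∈ Σ̃` and `w` tangent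
to `Σ̃` at `p`, `dβ(p)(X(p), w) = 2ε⁻²(2r²−1)z·β(p)(w)`, i.e.
`𝓛_X(β|TΣ̃) = 2ε⁻²(2r²−1)z · β|TΣ̃`. -/
theorem stmt4 (n : ℕ) (hn : 2 ≤ n) (ε : ℝ) (hε : 0 < ε) :
    ∀ p : Pt n, Hfun ε p = 1 + ε →
      ∀ w : Pt n, fderiv ℝ (Hfun ε : Pt n → ℝ) p w = 0 →
        dβval p (XV ε p) w = 2 * ε⁻¹ ^ 2 * (2 * r2 p - 1) * zz p * βval p w := by
  intro p hp w hw
  have hn1 : 1 ≤ n := by omega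
  rw [fderiv_Hfun] at hw
  have hS2 : ∑ i : Fin (n-1), (2 * xx i p * xx i w + 2 * yy i p * yy i w)
      = 2 * ∑ i : Fin (n-1), (xx i p * xx i w + yy i p * yy i w) := by
    rw [Finset.mul_sum]; exact Finset.sum_congr rfl fun i _ => by ring
  rw [hS2] at hw
  set S1 := ∑ i : Fin (n-1), (xx i p * yy i w - yy i p * xx i w) with hS1def
  set S2 := ∑ i : Fin (n-1), (xx i p * xx i w + yy i p * yy i w) with hS2def
  have hsum : ∑ i : Fin (n-1), (xx i (XV ε p) * yy i w - yy i (XV ε p) * xx i w)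
      = ε⁻¹ ^ 2 * (2 * r2 p - 1) * zz p * S1
        - ε⁻¹ ^ 2 * (2 * r2 p ^ 2 - 2 * r2 p + 1) * S2 := by
    rw [hS1def, hS2def, Finset.mul_sum, Finset.mul_sum, ← Finset.sum_sub_distrib]
    refine Finset.sum_congr rfl fun i _ => ?_
    rw [xx_XV hn1 ε p i, yy_XV hn1 ε p i, Xx, Xy]; ring
  rw [dβval, hsum, uu_XV hn1 ε p, vv_XV hn1 ε p, zz_XV hn1 ε p, βval, ← hS1def]
  rw [Xu, Xv, Xz]
  simp only [r2]
  linear_combination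
    (-2*((uu p ^ 2 + vv p ^ 2 - 1) ^ 2
        + (2 * (uu p ^ 2 + vv p ^ 2) - 1) * (ε⁻¹ ^ 2 * zz p ^ 2 - ε))
      - (2 * (uu p ^ 2 + vv p ^ 2) - 1) * (1 + 2 * ε - 2 * ε⁻¹ ^ 2 * zz p ^ 2)) * hw
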